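/- Assume μ and σ satisfy (μ1),(μ2),(σ1),(σ2). Put ξ = (ξ₁,…,ξ_k), define α = (α₁,…,α_k) by α_i = (μ(ξ_i−) − μ(ξ_i+))/(2σ²(ξ_i)) for i ∈ {1,…,k}, let ν ∈ (0,ρ_{ξ,α}), and extend G″_{ξ,α,ν} to ℝ by setting G″_{ξ,α,ν}(ξ_i) = 2α_i + 2(μ(ξ_i+) − μ(ξ_i))/σ²(ξ_i) for i ∈ {1,…,k}. Then the functions μ̃ = (G′_{ξ,α,ν}·μ + ½G″_{ξ,α,ν}·σ²)∘G_{ξ,α,ν}^{−1} and σ̃ = (G′_{ξ,α,ν}·σ)∘G_{ξ,α,ν}^{−1} satisfy the assumptions (μ1),(μ2) and (σ1),(σ2), respectively, and μ̃ is continuous on ℝ. (Lemma 4.2.) -/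

import Mathlib

open MeasureTheory ProbabilityTheory Filter Set
open scoped ENNReal NNReal

noncomputable section

namespace AdaptiveQM

/-- The open interval `(ξ_{i-1}, ξ_i)` (with `ξ₀ = -∞`, `ξ_{k+1} = ∞`) determined by the
strictly increasing family `ξ : Fin k → ℝ`. -/
def piece {k : ℕ} (ξ : Fin k → ℝ) (i : Fin (k + 1)) : Set ℝ :=
  {x | (∀ j : Fin k, (j : ℕ) < (i : ℕ) → ξ j < x) ∧ ∀ j : Fin k, (i : ℕ) ≤ (j : ℕ) → x < ξ j}

/-- Assumption (μ1)/(σ piecewise Lipschitz): Lipschitz continuity on each interval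
`(ξ_{i-1}, ξ_i)`. -/
def PiecewiseLipschitz {k : ℕ} (ξ : Fin k → ℝ) (f : ℝ → ℝ) : Prop :=
  ∀ i : Fin (k + 1), ∃ L : ℝ≥0, LipschitzOnWith L f (piece ξ i)

/-- Assumptions (μ2)/(σ2): `f` has a Lipschitz continuous derivative on each interval
`(ξ_{i-1}, ξ_i)`. -/
def PiecewiseC1Lipschitz {k : ℕ} (ξ : Fin k → ℝ) (f : ℝ → ℝ) : Prop :=
  ∀ i : Fin (k + 1), ∃ (f' : ℝ → ℝ) (L : ℝ≥0),
    (∀ x ∈ piece ξ i, HasDerivAt f (f' x) x) ∧ LipschitzOnWith L f' (piece ξ i)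

/-- `W` is a one-dimensional Brownian motion on `(Ω, F, P)`. -/
structure IsBrownianMotion {Ω : Type*} [MeasurableSpace Ω] (P : Measure Ω)
    (W : ℝ → Ω → ℝ) : Prop where
  meas : ∀ t, Measurable (W t)
  init : ∀ᵐ ω ∂P, W 0 ω = 0
  cont : ∀ᵐ ω ∂P, Continuous fun t => W t ω
  gauss : ∀ s t : ℝ, 0 ≤ s → s ≤ t →
    P.map (fun ω => W t ω - W s ω) = gaussianReal 0 (Real.toNNReal (t - s))
  indep : ∀ (n : ℕ) (t : Fin (n + 1) → ℝ), Monotone t → (∀ i, 0 ≤ t i) →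
    iIndepFun (m := fun _ : Fin n => (inferInstance : MeasurableSpace ℝ))
      (fun i ω => W (t i.succ) ω - W (t i.castSucc) ω) P

/-- `ε₁^δ = √δ · log²(1/δ)`. -/
def eps1 (δ : ℝ) : ℝ := Real.sqrt δ * (Real.log (1 / δ)) ^ 2

/-- `ε₂^δ = δ · log⁴(1/δ)`. -/
def eps2 (δ : ℝ) : ℝ := δ * (Real.log (1 / δ)) ^ 4

/-- The adaptive step-size function `h^δ`. -/
def stepSize (Θ : Set ℝ) (δ x : ℝ) : ℝ :=
  if Metric.infDist x Θ < eps2 δ then δ ^ 2 * (Real.log (1 / δ)) ^ 4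
  else if Metric.infDist x Θ < eps1 δ then (Metric.infDist x Θ / (Real.log (1 / δ)) ^ 2) ^ 2
  else δ

/-- One quasi-Milstein step: value at time `t` started from value `y` at time `u`, driven by
the path `w`.  Note `deriv s y = s'(y)` if `s` is differentiable at `y` and `0` otherwise. -/
def milsteinStep (b s : ℝ → ℝ) (y u t : ℝ) (w : ℝ → ℝ) : ℝ :=
  y + b y * (t - u) + s y * (w t - w u)
    + (1 / 2) * (s y * deriv s y) * ((w t - w u) ^ 2 - (t - u))

variable {Ω : Type*}

/-- The grid of the adaptive quasi-Milstein scheme: `grid b s Θ x₀ W δ i ω = (τ_i^δ(ω), X̂^δ_{τ_i^δ}(ω))`. -/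
def grid (b s : ℝ → ℝ) (Θ : Set ℝ) (x₀ : ℝ) (W : ℝ → Ω → ℝ) (δ : ℝ) :
    ℕ → Ω → ℝ × ℝ
  | 0 => fun _ => (0, x₀)
  | i + 1 => fun ω =>
      let p := grid b s Θ x₀ W δ i ω
      let t' := p.1 + stepSize Θ δ p.2
      (t', milsteinStep b s p.2 p.1 t' fun u => W u ω)

/-- `τ_i^δ`. -/
def gridTime (b s : ℝ → ℝ) (Θ : Set ℝ) (x₀ : ℝ) (W : ℝ → Ω → ℝ) (δ : ℝ) (i : ℕ) (ω : Ω) : ℝ :=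
  (grid b s Θ x₀ W δ i ω).1

/-- `X̂^δ_{τ_i^δ}`. -/
def gridVal (b s : ℝ → ℝ) (Θ : Set ℝ) (x₀ : ℝ) (W : ℝ → Ω → ℝ) (δ : ℝ) (i : ℕ) (ω : Ω) : ℝ :=
  (grid b s Θ x₀ W δ i ω).2

/-- The largest index `i` with `τ_i^δ ≤ t`. -/
def lastIdx (b s : ℝ → ℝ) (Θ : Set ℝ) (x₀ : ℝ) (W : ℝ → Ω → ℝ) (δ t : ℝ) (ω : Ω) : ℕ :=
  sSup {i : ℕ | gridTime b s Θ x₀ W δ i ω ≤ t}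

/-- `t̲^δ = max{τ_i^δ : τ_i^δ ≤ t}`. -/
def lastTime (b s : ℝ → ℝ) (Θ : Set ℝ) (x₀ : ℝ) (W : ℝ → Ω → ℝ) (δ t : ℝ) (ω : Ω) : ℝ :=
  gridTime b s Θ x₀ W δ (lastIdx b s Θ x₀ W δ t ω) ω

/-- `X̂^δ_{t̲^δ}`. -/
def lastVal (b s : ℝ → ℝ) (Θ : Set ℝ) (x₀ : ℝ) (W : ℝ → Ω → ℝ) (δ t : ℝ) (ω : Ω) : ℝ :=
  gridVal b s Θ x₀ W δ (lastIdx b s Θ x₀ W δ t ω) ω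

/-- The time-continuous adaptive quasi-Milstein scheme `X̂^δ_t`. -/
def scheme (b s : ℝ → ℝ) (Θ : Set ℝ) (x₀ : ℝ) (W : ℝ → Ω → ℝ) (δ t : ℝ) (ω : Ω) : ℝ :=
  milsteinStep b s (lastVal b s Θ x₀ W δ t ω) (lastTime b s Θ x₀ W δ t ω) t fun u => W u ω

/-- `N(X̂^δ_1) = min{i ∈ ℕ : τ_i^δ ≥ 1}`, the number of evaluations of `W`. -/
def numSteps (b s : ℝ → ℝ) (Θ : Set ℝ) (x₀ : ℝ) (W : ℝ → Ω → ℝ) (δ : ℝ) (ω : Ω) : ℕ :=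
  sInf {i : ℕ | 1 ≤ gridTime b s Θ x₀ W δ i ω}

/-- The augmented filtration `F_t = σ(σ(W_s : 0 ≤ s ≤ t) ∪ N)` generated by `W`. -/
def augFilt [MeasurableSpace Ω] (P : Measure Ω) (W : ℝ → Ω → ℝ) (t : ℝ) :
    MeasurableSpace Ω :=
  (⨆ s ∈ Set.Icc (0 : ℝ) t, MeasurableSpace.comap (W s) inferInstance) ⊔
    MeasurableSpace.generateFrom {A | MeasurableSet A ∧ P A = 0}

/-- `τ` is a stopping time with respect to the augmented Brownian filtration. -/
def IsAugStoppingTime [MeasurableSpace Ω] (P : Measure Ω) (W : ℝ → Ω → ℝ) (τ : Ω → ℝ) :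
    Prop :=
  ∀ t : ℝ, MeasurableSet[augFilt P W t] {ω | τ ω ≤ t}

/-- The σ-algebra `F_τ` of the `τ`-past. -/
def stoppedSigma [MeasurableSpace Ω] (P : Measure Ω) (W : ℝ → Ω → ℝ) (τ : Ω → ℝ) :
    MeasurableSpace Ω :=
  MeasurableSpace.generateFrom
    {A | MeasurableSet A ∧ ∀ t : ℝ, MeasurableSet[augFilt P W t] (A ∩ {ω | τ ω ≤ t})}

/-- The shifted process `W^τ_t = W_{τ+t} - W_τ`. -/
def shiftedBM (W : ℝ → Ω → ℝ) (τ : Ω → ℝ) : ℝ → Ω → ℝ :=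
  fun t ω => W (τ ω + t) ω - W (τ ω) ω

/-- Left-point Riemann sums for the Itô integral `∫₀ᵗ H dW` along dyadic partitions. -/
def riemannSum (H : ℝ → Ω → ℝ) (W : ℝ → Ω → ℝ) (t : ℝ) (n : ℕ) (ω : Ω) : ℝ :=
  ∑ i ∈ Finset.range (2 ^ n),
    H (t * i / 2 ^ n) ω * (W (t * (i + 1) / 2 ^ n) ω - W (t * i / 2 ^ n) ω)

/-- `X` is a strong solution of `dX_t = b(X_t) dt + s(X_t) dW_t`, `X₀ = x₀`: it is adapted to
the Brownian motion, has continuous paths, and satisfies the integral equation, the stochastic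
integral being the limit in probability of left-point Riemann sums. -/
def IsStrongSolution [MeasurableSpace Ω] (P : Measure Ω) (W : ℝ → Ω → ℝ)
    (b s : ℝ → ℝ) (x₀ : ℝ) (X : ℝ → Ω → ℝ) : Prop :=
  (∀ t, Measurable (X t)) ∧
  (∀ᵐ ω ∂P, Continuous fun t => X t ω) ∧
  (∀ᵐ ω ∂P, X 0 ω = x₀) ∧
  (∀ t : ℝ, 0 ≤ t → ∃ g : (ℝ → ℝ) → ℝ, Measurable g ∧
    ∀ᵐ ω ∂P, X t ω = g fun u => W (min u t) ω) ∧
  (∀ t : ℝ, 0 ≤ t →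
    TendstoInMeasure P (fun n ω => riemannSum (fun u ω' => s (X u ω')) W t n ω) atTop
      fun ω => X t ω - x₀ - ∫ u in (0 : ℝ)..t, b (X u ω))

/-- The bump function `φ(x) = (1-x²)⁴ · 1_{[-1,1]}(x)`. -/
def phiBump (x : ℝ) : ℝ := if x ∈ Set.Icc (-1 : ℝ) 1 then (1 - x ^ 2) ^ 4 else 0

/-- `ρ_{z,α}`, with the convention `1/0 = ∞`. -/
def rho {k : ℕ} (z α : Fin k → ℝ) : ℝ≥0∞ :=
  (⨅ i : Fin k, if α i = 0 then ⊤ else ENNReal.ofReal (1 / (8 * |α i|))) ⊓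
    ⨅ i : Fin k, ⨅ j : Fin k,
      if (i : ℕ) + 1 = (j : ℕ) then ENNReal.ofReal ((z j - z i) / 2) else ⊤

/-- The transformation `G_{z,α,ν}`. -/
def Gmap {k : ℕ} (z α : Fin k → ℝ) (ν : ℝ) (x : ℝ) : ℝ :=
  x + ∑ i : Fin k, α i * (x - z i) * |x - z i| * phiBump ((x - z i) / ν)

/-- The inverse `G_{z,α,ν}^{-1}`. -/
def Ginv {k : ℕ} (z α : Fin k → ℝ) (ν : ℝ) : ℝ → ℝ := Function.invFun (Gmap z α ν)

/-- `α_i = (μ(ξ_i-) - μ(ξ_i+)) / (2σ²(ξ_i))`. -/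
def alphaCoef (b s : ℝ → ℝ) {k : ℕ} (ξ : Fin k → ℝ) (i : Fin k) : ℝ :=
  (Function.leftLim b (ξ i) - Function.rightLim b (ξ i)) / (2 * (s (ξ i)) ^ 2)

open Classical in
/-- `G''_{ξ,α,ν}` extended to all of `ℝ` by
`G''(ξ_i) = 2α_i + 2(μ(ξ_i+) - μ(ξ_i))/σ²(ξ_i)`. -/
def GsecondExt (b s : ℝ → ℝ) {k : ℕ} (ξ : Fin k → ℝ) (ν : ℝ) (x : ℝ) : ℝ :=
  if h : ∃ i, ξ i = x then
    2 * alphaCoef b s ξ h.choose + 2 * (Function.rightLim b x - b x) / (s x) ^ 2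
  else deriv (deriv (Gmap ξ (alphaCoef b s ξ) ν)) x

/-- The transformed drift `μ̃ = (G'·μ + ½G''·σ²) ∘ G⁻¹`. -/
def tildeDrift (b s : ℝ → ℝ) {k : ℕ} (ξ : Fin k → ℝ) (ν : ℝ) (x : ℝ) : ℝ :=
  deriv (Gmap ξ (alphaCoef b s ξ) ν) (Ginv ξ (alphaCoef b s ξ) ν x) *
      b (Ginv ξ (alphaCoef b s ξ) ν x) +
    (1 / 2) * GsecondExt b s ξ ν (Ginv ξ (alphaCoef b s ξ) ν x) *
      (s (Ginv ξ (alphaCoef b s ξ) ν x)) ^ 2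

/-- The transformed diffusion coefficient `σ̃ = (G'·σ) ∘ G⁻¹`. -/
def tildeDiff (b s : ℝ → ℝ) {k : ℕ} (ξ : Fin k → ℝ) (ν : ℝ) (x : ℝ) : ℝ :=
  deriv (Gmap ξ (alphaCoef b s ξ) ν) (Ginv ξ (alphaCoef b s ξ) ν x) *
    s (Ginv ξ (alphaCoef b s ξ) ν x)

/-- The set `S = (⋃ᵢ (ξ_{i-1},ξ_i)²)ᶜ ⊆ ℝ²`. -/
def badSet {k : ℕ} (ξ : Fin k → ℝ) : Set (ℝ × ℝ) :=
  (⋃ i : Fin (k + 1), (piece ξ i) ×ˢ (piece ξ i))ᶜ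

/-!
On each piece `(ξᵢ₋₁, ξᵢ)` every `x - ξⱼ` has a fixed sign, so there `G` agrees with
`x + ∑ⱼ ±αⱼ ν² r((x - ξⱼ)/ν)`, where `r(u) = u² φ(u)` is `C³` with Lipschitz third derivative;
`G'`, `G''` and `G'''` restricted to a piece therefore extend to Lipschitz functions on `ℝ`, and
`G' - 1`, `G''`, `G'''` are supported near the knots. Since the bumps have disjoint supports and
`|αⱼ| ν ≤ 1/8`, `|G' - 1| ≤ 1/4`, so `G` is an increasing bi-Lipschitz bijection fixing the knots,
hence mapping each piece onto itself. A compactly supported Lipschitz function times a Lipschitz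
function is Lipschitz; with the chain rule through `G⁻¹` this gives the Lipschitz bounds for `μ̃`,
`σ̃` and their derivatives on each piece. Finally, `α` and `G''(ξᵢ)` are chosen so that both
one-sided limits of `G'μ + ½G''σ²` at `ξᵢ` equal its value there, which makes `μ̃` continuous.
-/

open Function Topology

section Lipschitz

theorem _root_.LipschitzOnWith.congr {α β : Type*} [PseudoEMetricSpace α] [PseudoEMetricSpace β]
    {K : ℝ≥0} {f g : α → β} {s : Set α} (hf : LipschitzOnWith K f s) (h : EqOn f g s) :
    LipschitzOnWith K g s := fun x hx y hy => by
  rw [← h hx, ← h hy]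
  exact hf hx hy

theorem _root_.LipschitzWith.const_mul {α : Type*} [PseudoEMetricSpace α] {f : α → ℝ}
    {K : ℝ≥0} (hf : LipschitzWith K f) (c : ℝ) : LipschitzWith (‖c‖₊ * K) fun x => c * f x :=
  (lipschitzWith_smul c).comp hf

theorem _root_.LipschitzWith.mul_of_bounded {α : Type*} [PseudoMetricSpace α] {f g : α → ℝ}
    {Kf Kg : ℝ≥0} {M N : ℝ} (hf : LipschitzWith Kf f) (hg : LipschitzWith Kg g)
    (hfM : ∀ x, |f x| ≤ M) (hgN : ∀ x, |g x| ≤ N) :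
    LipschitzWith (Real.toNNReal (M * Kg + N * Kf)) (f * g) := by
  refine LipschitzWith.of_dist_le' fun x y => ?_
  have hM : 0 ≤ M := (abs_nonneg _).trans (hfM x)
  have hN : 0 ≤ N := (abs_nonneg _).trans (hgN x)
  have hfxy := hf.dist_le_mul x y
  have hgxy := hg.dist_le_mul x y
  rw [Real.dist_eq] at hfxy hgxy ⊢
  calc |(f * g) x - (f * g) y| = |f x * (g x - g y) + g y * (f x - f y)| := by
        simp only [Pi.mul_apply]; ring_nf
    _ ≤ |f x| * |g x - g y| + |g y| * |f x - f y| := by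
        rw [← abs_mul, ← abs_mul]; exact abs_add_le _ _
    _ ≤ M * (Kg * dist x y) + N * (Kf * dist x y) := by gcongr <;> simp [hfM, hgN]
    _ = (M * Kg + N * Kf) * dist x y := by ring

/-- The product with a Lipschitz function only sees the values of `g` on a compact interval
containing the support of `f`, where `g` can be replaced by the bounded function `g ∘ projIcc`. -/
theorem _root_.LipschitzWith.mul_of_hasCompactSupport {f g : ℝ → ℝ} {Kf Kg : ℝ≥0}
    (hf : LipschitzWith Kf f) (hfc : HasCompactSupport f) (hg : LipschitzWith Kg g) :
    ∃ K, LipschitzWith K (f * g) := by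
  obtain ⟨M, hM⟩ := hfc.exists_bound_of_continuous hf.continuous
  obtain ⟨R₀, hR₀⟩ := hfc.isCompact.isBounded.subset_closedBall (0 : ℝ)
  set R := max R₀ 0
  have hR : -R ≤ R := by linarith [le_max_right R₀ 0]
  set p : ℝ → ℝ := Subtype.val ∘ projIcc (-R) R hR
  have hp : LipschitzWith 1 p := by
    simpa using (LipschitzWith.subtype_val _).comp (LipschitzWith.projIcc hR)
  have hgp : ∀ x, |g (p x)| ≤ |g 0| + Kg * R := fun x => by
    have h1 := hg.dist_le_mul (p x) 0
    have h2 : |p x| ≤ R := abs_le.2 (projIcc (-R) R hR x).2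
    rw [Real.dist_eq, Real.dist_eq, sub_zero] at h1
    have := abs_sub_abs_le_abs_sub (g (p x)) (g 0)
    nlinarith [Kg.coe_nonneg]
  have hfg : f * g = f * (g ∘ p) := funext fun x => by
    by_cases hx : x ∈ tsupport f
    · have hxR : x ∈ Icc (-R) R := by
        have := mem_closedBall_zero_iff.1 (hR₀ hx)
        exact abs_le.1 (this.trans (le_max_left _ _))
      simp [p, projIcc_of_mem hR hxR]
    · simp [image_eq_zero_of_notMem_tsupport hx]
  exact ⟨_, hfg ▸ hf.mul_of_bounded (hg.comp hp) (fun x => by simpa using hM x) hgp⟩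

theorem _root_.LipschitzWith.inv_of_le {α : Type*} [PseudoMetricSpace α] {f : α → ℝ}
    {K : ℝ≥0} {c : ℝ} (hf : LipschitzWith K f) (hc : 0 < c) (hfc : ∀ x, c ≤ f x) :
    LipschitzWith (Real.toNNReal (K / c ^ 2)) f⁻¹ := by
  refine LipschitzWith.of_dist_le' fun x y => ?_
  have hx := hfc x
  have hy := hfc y
  have hxy := hf.dist_le_mul x y
  rw [Real.dist_eq] at hxy ⊢
  have hprod : c ^ 2 ≤ f x * f y := by nlinarith
  calc |f⁻¹ x - f⁻¹ y| = |f x - f y| / (f x * f y) := by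
        rw [Pi.inv_apply, Pi.inv_apply, inv_sub_inv (by linarith) (by linarith), abs_div,
          abs_of_pos (by nlinarith : 0 < f x * f y), abs_sub_comm]
    _ ≤ K * dist x y / c ^ 2 := div_le_div₀ (by positivity) hxy (by positivity) hprod
    _ = K / c ^ 2 * dist x y := by ring

end Lipschitz

section IndicatorIcc

theorem exists_lipschitzWith_indicator_Icc {a b : ℝ} (hab : a ≤ b) {P : ℝ → ℝ}
    (hP : ContDiff ℝ 1 P) (ha : P a = 0) (hb : P b = 0) :
    ∃ K, LipschitzWith K ((Icc a b).indicator P) := by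
  obtain ⟨K, hK⟩ := hP.contDiffOn.exists_lipschitzOnWith one_ne_zero (convex_Icc a b)
    isCompact_Icc
  have h : (Icc a b).indicator P = (Icc a b).domRestrict P ∘ projIcc a b hab := funext fun x => by
    rcases lt_or_ge x a with hxa | hxa
    · simp [projIcc_of_le_left hab hxa.le,
        indicator_of_notMem (show x ∉ Icc a b from fun h => hxa.not_ge h.1), ha]
    rcases le_or_gt x b with hxb | hxb
    · simp [projIcc_of_mem hab ⟨hxa, hxb⟩, indicator_of_mem (show x ∈ Icc a b from ⟨hxa, hxb⟩)]
    · simp [projIcc_of_right_le hab hxb.le,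
        indicator_of_notMem (show x ∉ Icc a b from fun h => hxb.not_ge h.2), hb]
  exact ⟨K * 1, h ▸ hK.to_restrict.comp (LipschitzWith.projIcc hab)⟩

theorem hasDerivAt_indicator_Icc {a b : ℝ} {P P' : ℝ → ℝ}
    (hP : ∀ x, HasDerivAt P (P' x) x) (ha : P a = 0) (hb : P b = 0) (ha' : P' a = 0)
    (hb' : P' b = 0) (x : ℝ) :
    HasDerivAt ((Icc a b).indicator P) ((Icc a b).indicator P' x) x := by
  have hzero : ∀ y ∉ Ioo a b, (Icc a b).indicator P y = 0 := fun y hy => by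
    by_cases hy' : y ∈ Icc a b
    · rcases eq_or_lt_of_le hy'.1 with rfl | h1
      · simp [ha]
      · rw [(eq_of_le_of_not_lt hy'.2 fun h2 => hy ⟨h1, h2⟩)]; simp [hb]
    · exact indicator_of_notMem hy' P
  have hout : ∀ y, y ∉ Icc a b → HasDerivAt ((Icc a b).indicator P) 0 y := fun y hy => by
    refine (hasDerivAt_const y (0 : ℝ)).congr_of_eventuallyEq ?_
    filter_upwards [isClosed_Icc.isOpen_compl.mem_nhds hy] with z hz
    exact hzero z fun h => hz (Ioo_subset_Icc_self h)
  by_cases hx : x ∈ Ioo a b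
  · rw [indicator_of_mem (Ioo_subset_Icc_self hx)]
    refine (hP x).congr_of_eventuallyEq ?_
    filter_upwards [isOpen_Ioo.mem_nhds hx] with y hy
    exact indicator_of_mem (Ioo_subset_Icc_self hy) P
  by_cases hx' : x ∈ Icc a b
  swap
  · rw [indicator_of_notMem hx']; exact hout x hx'
  rw [indicator_of_mem hx']
  -- At an endpoint the one-sided derivatives are `P' x = 0` from inside and `0` from outside.
  have hP'x : P' x = 0 := by
    rcases eq_or_lt_of_le hx'.1 with rfl | h1
    · exact ha'
    · rw [eq_of_le_of_not_lt hx'.2 fun h2 => hx ⟨h1, h2⟩]; exact hb'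
  have hinside : HasDerivWithinAt ((Icc a b).indicator P) (P' x) (Icc a b) x :=
    (hP x).hasDerivWithinAt.congr (fun y hy => indicator_of_mem hy P) (indicator_of_mem hx' P)
  have houtside : HasDerivWithinAt ((Icc a b).indicator P) (P' x) (Icc a b)ᶜ x := by
    rw [hP'x]
    refine (hasDerivWithinAt_const x _ (0 : ℝ)).congr (fun y hy => ?_) (hzero x hx)
    exact hzero y fun h => hy (Ioo_subset_Icc_self h)
  simpa using hinside.union houtside

theorem indicator_Icc_eq_zero_of_one_lt_abs (P : ℝ → ℝ) {u : ℝ} (hu : 1 < |u|) :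
    (Icc (-1 : ℝ) 1).indicator P u = 0 :=
  indicator_of_notMem (show u ∉ Icc (-1 : ℝ) 1 from fun h => hu.not_ge (abs_le.2 h)) P

end IndicatorIcc

section Profile

/- `u² φ(u)` and its first three derivatives are the truncations to `[-1, 1]` of the following
polynomials; all four vanish at `±1` because of the factor `(1 - u²)⁴` of `φ`. -/
def sqBumpPoly (u : ℝ) : ℝ := u ^ 2 * (1 - u ^ 2) ^ 4
def sqBumpPoly' (u : ℝ) : ℝ := 2 * u * (1 - u ^ 2) ^ 3 * (1 - 5 * u ^ 2)
def sqBumpPoly'' (u : ℝ) : ℝ := 2 * (1 - u ^ 2) ^ 2 * (1 - 22 * u ^ 2 + 45 * u ^ 4)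
def sqBumpPoly''' (u : ℝ) : ℝ := 48 * u * (1 - u ^ 2) * (-2 + 13 * u ^ 2 - 15 * u ^ 4)

def sqBump : ℝ → ℝ := (Icc (-1 : ℝ) 1).indicator sqBumpPoly
def sqBump' : ℝ → ℝ := (Icc (-1 : ℝ) 1).indicator sqBumpPoly'
def sqBump'' : ℝ → ℝ := (Icc (-1 : ℝ) 1).indicator sqBumpPoly''
def sqBump''' : ℝ → ℝ := (Icc (-1 : ℝ) 1).indicator sqBumpPoly'''

theorem hasDerivAt_sqBumpPoly (u : ℝ) : HasDerivAt sqBumpPoly (sqBumpPoly' u) u := by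
  have h := (hasDerivAt_pow 2 u).fun_mul (((hasDerivAt_pow 2 u).const_sub 1).fun_pow 4)
  exact h.congr_deriv (by simp only [sqBumpPoly']; push_cast; ring)

theorem hasDerivAt_sqBumpPoly' (u : ℝ) : HasDerivAt sqBumpPoly' (sqBumpPoly'' u) u := by
  have h := (((hasDerivAt_id u).const_mul 2).fun_mul
    (((hasDerivAt_pow 2 u).const_sub 1).fun_pow 3)).fun_mul
    (((hasDerivAt_pow 2 u).const_mul 5).const_sub 1)
  exact h.congr_deriv (by simp only [sqBumpPoly'', id]; push_cast; ring)

theorem hasDerivAt_sqBumpPoly'' (u : ℝ) : HasDerivAt sqBumpPoly'' (sqBumpPoly''' u) u := by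
  have h := ((((hasDerivAt_pow 2 u).const_sub 1).fun_pow 2).const_mul 2).fun_mul
    ((((hasDerivAt_pow 2 u).const_mul 22).const_sub 1).fun_add ((hasDerivAt_pow 4 u).const_mul 45))
  exact h.congr_deriv (by simp only [sqBumpPoly''']; push_cast; ring)

theorem hasDerivAt_sqBump (u : ℝ) : HasDerivAt sqBump (sqBump' u) u :=
  hasDerivAt_indicator_Icc hasDerivAt_sqBumpPoly (by norm_num [sqBumpPoly])
    (by norm_num [sqBumpPoly]) (by norm_num [sqBumpPoly']) (by norm_num [sqBumpPoly']) u

theorem hasDerivAt_sqBump' (u : ℝ) : HasDerivAt sqBump' (sqBump'' u) u :=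
  hasDerivAt_indicator_Icc hasDerivAt_sqBumpPoly' (by norm_num [sqBumpPoly'])
    (by norm_num [sqBumpPoly']) (by norm_num [sqBumpPoly'']) (by norm_num [sqBumpPoly'']) u

theorem hasDerivAt_sqBump'' (u : ℝ) : HasDerivAt sqBump'' (sqBump''' u) u :=
  hasDerivAt_indicator_Icc hasDerivAt_sqBumpPoly'' (by norm_num [sqBumpPoly''])
    (by norm_num [sqBumpPoly'']) (by norm_num [sqBumpPoly''']) (by norm_num [sqBumpPoly''']) u

theorem exists_lipschitzWith_sqBump' : ∃ K, LipschitzWith K sqBump' :=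
  exists_lipschitzWith_indicator_Icc (by norm_num) (by unfold sqBumpPoly'; fun_prop)
    (by norm_num [sqBumpPoly']) (by norm_num [sqBumpPoly'])

theorem exists_lipschitzWith_sqBump'' : ∃ K, LipschitzWith K sqBump'' :=
  exists_lipschitzWith_indicator_Icc (by norm_num) (by unfold sqBumpPoly''; fun_prop)
    (by norm_num [sqBumpPoly'']) (by norm_num [sqBumpPoly''])

theorem exists_lipschitzWith_sqBump''' : ∃ K, LipschitzWith K sqBump''' :=
  exists_lipschitzWith_indicator_Icc (by norm_num) (by unfold sqBumpPoly'''; fun_prop)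
    (by norm_num [sqBumpPoly''']) (by norm_num [sqBumpPoly'''])

theorem sqBump'_neg (u : ℝ) : sqBump' (-u) = -sqBump' u := by
  by_cases hu : u ∈ Icc (-1 : ℝ) 1
  · have hu' : -u ∈ Icc (-1 : ℝ) 1 := ⟨by linarith [hu.2], by linarith [hu.1]⟩
    simp only [sqBump', indicator_of_mem hu, indicator_of_mem hu', sqBumpPoly']
    ring
  · have hu' : -u ∉ Icc (-1 : ℝ) 1 := fun h => hu ⟨by linarith [h.2], by linarith [h.1]⟩
    simp [sqBump', indicator_of_notMem hu, indicator_of_notMem hu']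

theorem abs_sqBump'_le (u : ℝ) : |sqBump' u| ≤ 2 := by
  by_cases hu : u ∈ Icc (-1 : ℝ) 1
  · simp only [sqBump', indicator_of_mem hu, sqBumpPoly']
    have h1 : |u| ≤ 1 := abs_le.2 hu
    have h2 : 0 ≤ 1 - u ^ 2 := by nlinarith [hu.1, hu.2]
    have h3 : |(1 - u ^ 2) * (1 - 5 * u ^ 2)| ≤ 1 := by
      rw [abs_le]; constructor <;> nlinarith [sq_nonneg u, sq_nonneg (u ^ 2 - 3 / 5)]
    have h4 : (1 - u ^ 2) ^ 2 ≤ 1 := by nlinarith [sq_nonneg u]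
    calc |2 * u * (1 - u ^ 2) ^ 3 * (1 - 5 * u ^ 2)|
        = 2 * (|u| * ((1 - u ^ 2) ^ 2 * |(1 - u ^ 2) * (1 - 5 * u ^ 2)|)) := by
          rw [show 2 * u * (1 - u ^ 2) ^ 3 * (1 - 5 * u ^ 2)
            = 2 * (u * ((1 - u ^ 2) ^ 2 * ((1 - u ^ 2) * (1 - 5 * u ^ 2)))) by ring]
          simp only [abs_mul, abs_two, abs_pow, abs_of_nonneg h2]
      _ ≤ 2 * (1 * (1 * 1)) := by gcongr
      _ = 2 := by norm_num
  · simp [sqBump', indicator_of_notMem hu]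

theorem sqBump'_zero : sqBump' 0 = 0 := by simp [sqBump', sqBumpPoly']

theorem sqBump''_zero : sqBump'' 0 = 2 := by norm_num [sqBump'', sqBumpPoly'']

def oddBump (u : ℝ) : ℝ := u * |u| * phiBump u

theorem oddBump_of_nonneg {u : ℝ} (hu : 0 ≤ u) : oddBump u = sqBump u := by
  by_cases h : u ∈ Icc (-1 : ℝ) 1
  · simp only [oddBump, sqBump, phiBump, sqBumpPoly, indicator_of_mem h, if_pos h,
      abs_of_nonneg hu]
    ring
  · simp [oddBump, sqBump, phiBump, h]

theorem oddBump_of_nonpos {u : ℝ} (hu : u ≤ 0) : oddBump u = -sqBump u := by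
  by_cases h : u ∈ Icc (-1 : ℝ) 1
  · simp only [oddBump, sqBump, phiBump, sqBumpPoly, indicator_of_mem h, if_pos h,
      abs_of_nonpos hu]
    ring
  · simp [oddBump, sqBump, phiBump, h]

theorem hasDerivAt_oddBump (u : ℝ) : HasDerivAt oddBump (sqBump' |u|) u := by
  rcases lt_trichotomy u 0 with hu | rfl | hu
  · rw [abs_of_neg hu, sqBump'_neg]
    refine (hasDerivAt_sqBump u).neg.congr_of_eventuallyEq ?_
    filter_upwards [Iio_mem_nhds hu] with v hv
    exact oddBump_of_nonpos (le_of_lt hv)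
  · have hright : HasDerivWithinAt oddBump (sqBump' 0) (Ici 0) 0 :=
      (hasDerivAt_sqBump 0).hasDerivWithinAt.congr (fun v hv => oddBump_of_nonneg hv)
        (oddBump_of_nonneg le_rfl)
    have hleft : HasDerivWithinAt oddBump (sqBump' 0) (Iic 0) 0 := by
      have h := (hasDerivAt_sqBump 0).neg.hasDerivWithinAt (s := Iic 0)
      rw [sqBump'_zero, neg_zero] at h
      rw [sqBump'_zero]
      exact h.congr (fun v hv => oddBump_of_nonpos hv) (oddBump_of_nonpos le_rfl)
    simpa using hleft.union hright
  · rw [abs_of_pos hu]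
    refine (hasDerivAt_sqBump u).congr_of_eventuallyEq ?_
    filter_upwards [Ioi_mem_nhds hu] with v hv
    exact oddBump_of_nonneg (le_of_lt hv)

end Profile

section Pieces

variable {k : ℕ} {ξ : Fin k → ℝ}

theorem isOpen_piece (ξ : Fin k → ℝ) (i : Fin (k + 1)) : IsOpen (piece ξ i) := by
  have h : piece ξ i = (⋂ j ∈ {j : Fin k | (j : ℕ) < i}, Ioi (ξ j)) ∩
      ⋂ j ∈ {j : Fin k | (i : ℕ) ≤ j}, Iio (ξ j) := by
    ext x; simp [piece]
  rw [h]
  exact ((toFinite _).isOpen_biInter fun _ _ => isOpen_Ioi).inter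
    ((toFinite _).isOpen_biInter fun _ _ => isOpen_Iio)

theorem ne_of_mem_piece {i : Fin (k + 1)} {x : ℝ} (hx : x ∈ piece ξ i) (j : Fin k) :
    x ≠ ξ j := by
  by_cases hj : (j : ℕ) < i
  · exact (hx.1 j hj).ne'
  · exact (hx.2 j (not_lt.1 hj)).ne

theorem exists_mem_piece (hξ : StrictMono ξ) {x : ℝ} (hx : ∀ j, x ≠ ξ j) :
    ∃ i, x ∈ piece ξ i := by
  classical
  set S := Finset.univ.filter fun j : Fin k => ξ j < x
  have hright : ∀ j, j ∉ S → x < ξ j := fun j hj =>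
    lt_of_le_of_ne (not_lt.1 fun h => hj (by simp [S, h])) (hx j)
  by_cases hS : S.Nonempty
  · -- The piece to the right of the last knot below `x`.
    obtain ⟨m, hmS, hmax⟩ : ∃ m ∈ S, ∀ j ∈ S, j ≤ m :=
      ⟨S.max' hS, S.max'_mem hS, fun j hj => S.le_max' j hj⟩
    have hm : ξ m < x := (Finset.mem_filter.1 hmS).2
    refine ⟨m.succ, fun j hj => (hξ.monotone ?_).trans_lt hm, fun j hj => hright j fun hjS => ?_⟩
    · simp only [Fin.val_succ] at hj
      exact Fin.le_def.2 (by omega)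
    · have := Fin.le_def.1 (hmax j hjS)
      simp only [Fin.val_succ] at hj
      omega
  · exact ⟨0, fun j hj => absurd hj (Nat.not_lt_zero _),
      fun j _ => hright j fun hj => hS ⟨j, hj⟩⟩

theorem eventually_mem_piece_castSucc (hξ : StrictMono ξ) (i : Fin k) :
    ∀ᶠ x in 𝓝[<] ξ i, x ∈ piece ξ i.castSucc := by
  have hbelow : ∀ᶠ x in 𝓝 (ξ i), ∀ j : Fin k, (j : ℕ) < i → ξ j < x :=
    eventually_all.2 fun j => if hj : (j : ℕ) < i then
      (lt_mem_nhds (hξ hj)).mono fun _ h _ => h else Eventually.of_forall fun _ h => absurd h hj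
  filter_upwards [nhdsWithin_le_nhds hbelow, self_mem_nhdsWithin] with x hx hxi
  exact ⟨fun j hj => hx j hj, fun j hj => (mem_Iio.1 hxi).trans_le (hξ.monotone hj)⟩

theorem eventually_mem_piece_succ (hξ : StrictMono ξ) (i : Fin k) :
    ∀ᶠ x in 𝓝[>] ξ i, x ∈ piece ξ i.succ := by
  have habove : ∀ᶠ x in 𝓝 (ξ i), ∀ j : Fin k, (i : ℕ) + 1 ≤ j → x < ξ j :=
    eventually_all.2 fun j => if hj : (i : ℕ) + 1 ≤ j then
      (gt_mem_nhds (hξ (Fin.lt_def.2 hj))).mono fun _ h _ => h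
    else Eventually.of_forall fun _ h => absurd h hj
  filter_upwards [nhdsWithin_le_nhds habove, self_mem_nhdsWithin] with x hx hxi
  refine ⟨fun j hj => (hξ.monotone ?_).trans_lt (mem_Ioi.1 hxi), fun j hj => hx j hj⟩
  simp only [Fin.val_succ] at hj
  exact Fin.mk_le_mk.2 (by omega)

/-- The sign of `x - ξ j` for `x` in the piece `i`. -/
def pieceSign (i : Fin (k + 1)) (j : Fin k) : ℝ := if (j : ℕ) < i then 1 else -1

end Pieces

section KnotSum

variable {k : ℕ}

def knotSum (ξ : Fin k → ℝ) (ν : ℝ) (c : Fin k → ℝ) (F : ℝ → ℝ) (x : ℝ) : ℝ :=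
  ∑ j, c j * F ((x - ξ j) / ν)

variable {ξ : Fin k → ℝ} {ν : ℝ} {c : Fin k → ℝ} {F : ℝ → ℝ}

theorem eq_zero_of_lt_abs_sub (hF : ∀ u, 1 < |u| → F u = 0) (hν : 0 < ν) {x z : ℝ}
    (h : ν < |x - z|) : F ((x - z) / ν) = 0 :=
  hF _ (by rwa [abs_div, abs_of_pos hν, one_lt_div hν])

theorem hasDerivAt_knotSum {F' : ℝ → ℝ} (hF : ∀ u, HasDerivAt F (F' u) u) (x : ℝ) :
    HasDerivAt (knotSum ξ ν c F) (knotSum ξ ν (fun j => c j / ν) F' x) x := by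
  have h : ∀ j ∈ Finset.univ, HasDerivAt (fun y => c j * F ((y - ξ j) / ν))
      (c j / ν * F' ((x - ξ j) / ν)) x := fun j _ => by
    have := ((hF _).comp x (((hasDerivAt_id x).sub_const (ξ j)).div_const ν)).const_mul (c j)
    exact this.congr_deriv (by simp only [id]; ring)
  exact HasDerivAt.fun_sum h

theorem exists_lipschitzWith_knotSum {K : ℝ≥0} (hF : LipschitzWith K F) :
    ∃ K', LipschitzWith K' (knotSum ξ ν c F) := by
  refine ⟨_, LipschitzWith.of_dist_le' (K := ∑ j, |c j| * K / |ν|) fun x y => ?_⟩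
  rw [Real.dist_eq, Real.dist_eq, knotSum, knotSum, ← Finset.sum_sub_distrib, Finset.sum_mul]
  refine (Finset.abs_sum_le_sum_abs _ _).trans (Finset.sum_le_sum fun j _ => ?_)
  have h := hF.dist_le_mul ((x - ξ j) / ν) ((y - ξ j) / ν)
  rw [Real.dist_eq, Real.dist_eq, ← sub_div, sub_sub_sub_cancel_right, abs_div] at h
  rw [← mul_sub, abs_mul]
  calc |c j| * |F ((x - ξ j) / ν) - F ((y - ξ j) / ν)| ≤ |c j| * (K * (|x - y| / |ν|)) := by
        gcongr
    _ = |c j| * K / |ν| * |x - y| := by ring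

theorem hasCompactSupport_knotSum (hF : ∀ u, 1 < |u| → F u = 0) (hν : 0 < ν) :
    HasCompactSupport (knotSum ξ ν c F) := by
  refine HasCompactSupport.intro (isCompact_iUnion fun j => isCompact_closedBall (ξ j) ν)
    fun x hx => Finset.sum_eq_zero fun j _ => ?_
  have h : ν < |x - ξ j| := by
    simpa [Real.dist_eq] using fun h => hx (mem_iUnion.2 ⟨j, h⟩)
  rw [eq_zero_of_lt_abs_sub hF hν h, mul_zero]

theorem knotSum_knot (hgap : ∀ i j, i ≠ j → 2 * ν < |ξ i - ξ j|)
    (hF : ∀ u, 1 < |u| → F u = 0) (hν : 0 < ν) (i : Fin k) :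
    knotSum ξ ν c F (ξ i) = c i * F 0 := by
  rw [knotSum, Finset.sum_eq_single i (fun j _ hji => ?_) (by simp), sub_self, zero_div]
  rw [eq_zero_of_lt_abs_sub hF hν (by linarith [hgap i j (Ne.symm hji)]), mul_zero]

/-- The supports of the summands are disjoint, so at most one of them is nonzero at `x`. -/
theorem abs_knotSum_le (hgap : ∀ i j, i ≠ j → 2 * ν < |ξ i - ξ j|)
    (hF : ∀ u, 1 < |u| → F u = 0) (hν : 0 < ν) {C M : ℝ} (hC : 0 ≤ C)
    (hc : ∀ j, |c j| ≤ C) (hM : ∀ u, |F u| ≤ M) (x : ℝ) : |knotSum ξ ν c F x| ≤ C * M := by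
  have hM0 : 0 ≤ M := (abs_nonneg _).trans (hM 0)
  by_cases hnear : ∃ j, |x - ξ j| ≤ ν
  · obtain ⟨j, hj⟩ := hnear
    rw [knotSum, Finset.sum_eq_single j (fun l _ hlj => ?_) (by simp), abs_mul]
    · exact mul_le_mul (hc j) (hM _) (abs_nonneg _) hC
    have h := hgap j l (Ne.symm hlj)
    have h' : |ξ j - ξ l| ≤ |x - ξ j| + |x - ξ l| := by
      simpa [abs_sub_comm] using abs_sub_le (ξ j) x (ξ l)
    rw [eq_zero_of_lt_abs_sub hF hν (by linarith), mul_zero]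
  · simp only [not_exists, not_le] at hnear
    rw [knotSum, Finset.sum_eq_zero fun j _ => by rw [eq_zero_of_lt_abs_sub hF hν (hnear j),
      mul_zero], abs_zero]
    positivity

end KnotSum

section Transformation

variable {k : ℕ} {ξ α : Fin k → ℝ} {ν : ℝ}

/-- The consequences of `0 < ν < ρ_{ξ,α}` that the construction of `G` uses. -/
structure IsAdmissibleWidth (ξ α : Fin k → ℝ) (ν : ℝ) : Prop where
  pos : 0 < ν
  gap : ∀ i j, i ≠ j → 2 * ν < |ξ i - ξ j|
  small : ∀ j, |α j| * ν ≤ 1 / 8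

theorem isAdmissibleWidth_of_lt_rho (hξ : StrictMono ξ) (hν : 0 < ν)
    (h : ENNReal.ofReal ν < rho ξ α) : IsAdmissibleWidth ξ α ν := by
  have hlt : ∀ {r : ℝ}, rho ξ α ≤ ENNReal.ofReal r → ν < r := fun hr =>
    ((ENNReal.ofReal_lt_ofReal_iff').1 (h.trans_le hr)).1
  have hstep : ∀ i j : Fin k, i < j → 2 * ν < ξ j - ξ i := fun i j hij => by
    set i' : Fin k := ⟨i + 1, by omega⟩
    have hν' : ν < (ξ i' - ξ i) / 2 :=
      hlt (inf_le_right.trans ((iInf_le _ i).trans ((iInf_le _ i').trans (by rw [if_pos rfl]))))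
    have : ξ i' ≤ ξ j := hξ.monotone (Fin.le_def.2 (by simp only [i']; omega))
    linarith
  refine ⟨hν, fun i j hij => ?_, fun j => ?_⟩
  · rcases lt_or_gt_of_ne hij with h | h
    · rw [abs_sub_comm, abs_of_pos (by linarith [hstep i j h])]; exact hstep i j h
    · rw [abs_of_pos (by linarith [hstep j i h])]; exact hstep j i h
  · by_cases hα : α j = 0
    · simp [hα]
    have hpos : 0 < |α j| := abs_pos.2 hα
    have hν' : ν < 1 / (8 * |α j|) :=
      hlt (inf_le_left.trans ((iInf_le _ j).trans (by rw [if_neg hα])))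
    rw [lt_div_iff₀ (by positivity)] at hν'
    linarith

theorem oddBump_eq_zero_of_one_lt_abs {u : ℝ} (hu : 1 < |u|) : oddBump u = 0 := by
  simp [oddBump, phiBump, show u ∉ Icc (-1 : ℝ) 1 from fun h => hu.not_ge (abs_le.2 h)]

theorem Gmap_eq_knotSum (hν : 0 < ν) :
    Gmap ξ α ν = fun x => x + knotSum ξ ν (fun j => α j * ν ^ 2) oddBump x := by
  funext x
  refine congrArg (x + ·) (Finset.sum_congr rfl fun j _ => ?_)
  rw [oddBump, abs_div, abs_of_pos hν]
  field_simp

def Gderiv (ξ α : Fin k → ℝ) (ν : ℝ) (x : ℝ) : ℝ :=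
  1 + knotSum ξ ν (fun j => α j * ν) (fun u => sqBump' |u|) x

theorem hasDerivAt_Gmap (hν : 0 < ν) (x : ℝ) : HasDerivAt (Gmap ξ α ν) (Gderiv ξ α ν x) x := by
  rw [Gmap_eq_knotSum hν]
  refine ((hasDerivAt_id x).add (hasDerivAt_knotSum hasDerivAt_oddBump x)).congr_deriv ?_
  simp only [Gderiv, knotSum]
  congr 1
  refine Finset.sum_congr rfl fun j _ => ?_
  field_simp

theorem deriv_Gmap (hν : 0 < ν) : deriv (Gmap ξ α ν) = Gderiv ξ α ν :=
  funext fun x => (hasDerivAt_Gmap hν x).deriv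

theorem Gmap_knot (hν : 0 < ν) (hgap : ∀ i j, i ≠ j → 2 * ν < |ξ i - ξ j|) (i : Fin k) :
    Gmap ξ α ν (ξ i) = ξ i := by
  rw [Gmap_eq_knotSum hν]
  simp [knotSum_knot hgap (fun _ => oddBump_eq_zero_of_one_lt_abs) hν, oddBump]

theorem Gderiv_knot (hν : 0 < ν) (hgap : ∀ i j, i ≠ j → 2 * ν < |ξ i - ξ j|) (i : Fin k) :
    Gderiv ξ α ν (ξ i) = 1 := by
  have hF : ∀ u : ℝ, 1 < |u| → sqBump' |u| = 0 := fun u hu =>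
    indicator_Icc_eq_zero_of_one_lt_abs _ (by rwa [abs_abs])
  simp [Gderiv, knotSum_knot hgap hF hν, sqBump'_zero]

theorem exists_lipschitzWith_Gderiv_mul (hν : 0 < ν) {g : ℝ → ℝ} {K : ℝ≥0}
    (hg : LipschitzWith K g) : ∃ K', LipschitzWith K' fun x => Gderiv ξ α ν x * g x := by
  obtain ⟨K₁, h₁⟩ := exists_lipschitzWith_sqBump'
  have hF : LipschitzWith (K₁ * 1) fun u : ℝ => sqBump' |u| := h₁.comp lipschitzWith_one_norm
  obtain ⟨K₂, h₂⟩ := exists_lipschitzWith_knotSum (ξ := ξ) (ν := ν) (c := fun j => α j * ν) hF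
  have hc : HasCompactSupport (knotSum ξ ν (fun j => α j * ν) fun u => sqBump' |u|) :=
    hasCompactSupport_knotSum (fun u hu => indicator_Icc_eq_zero_of_one_lt_abs _
      (by rwa [abs_abs])) hν
  obtain ⟨K₃, h₃⟩ := h₂.mul_of_hasCompactSupport hc hg
  have h : (fun x => Gderiv ξ α ν x * g x) = fun x => g x + (knotSum ξ ν (fun j => α j * ν)
      (fun u => sqBump' |u|) * g) x := funext fun x => by simp only [Gderiv, Pi.mul_apply]; ring
  exact ⟨K + K₃, h ▸ hg.add h₃⟩

theorem abs_Gderiv_sub_one_le (hA : IsAdmissibleWidth ξ α ν) (x : ℝ) :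
    |Gderiv ξ α ν x - 1| ≤ 1 / 4 := by
  have h := abs_knotSum_le (c := fun j => α j * ν) (F := fun u => sqBump' |u|) hA.gap
    (fun u hu => indicator_Icc_eq_zero_of_one_lt_abs _ (by rwa [abs_abs])) hA.pos
    (by norm_num : (0 : ℝ) ≤ 1 / 8)
    (fun j => by rw [abs_mul, abs_of_pos hA.pos]; exact hA.small j) (fun u => abs_sqBump'_le |u|) x
  simp only [Gderiv, add_sub_cancel_left]
  linarith

theorem half_le_Gderiv (hA : IsAdmissibleWidth ξ α ν) (x : ℝ) : 1 / 2 ≤ Gderiv ξ α ν x := by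
  linarith [(abs_le.1 (abs_Gderiv_sub_one_le hA x)).1]

theorem exists_lipschitzWith_inv_Gderiv (hA : IsAdmissibleWidth ξ α ν) :
    ∃ K, LipschitzWith K fun x => (Gderiv ξ α ν x)⁻¹ := by
  obtain ⟨K, hK⟩ := exists_lipschitzWith_Gderiv_mul (ξ := ξ) (α := α) hA.pos
    (LipschitzWith.const (1 : ℝ))
  simp only [mul_one] at hK
  exact ⟨_, hK.inv_of_le (by norm_num : (0 : ℝ) < 1 / 2) (half_le_Gderiv hA)⟩

theorem sub_div_two_le_Gmap_sub (hA : IsAdmissibleWidth ξ α ν) {x y : ℝ} (hxy : x ≤ y) :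
    (y - x) / 2 ≤ Gmap ξ α ν y - Gmap ξ α ν x := by
  have hd : ∀ x, HasDerivAt (fun x => Gmap ξ α ν x - x / 2) (Gderiv ξ α ν x - 1 / 2) x :=
    fun x => (hasDerivAt_Gmap hA.pos x).sub ((hasDerivAt_id x).div_const 2)
  have hmono : Monotone fun x => Gmap ξ α ν x - x / 2 :=
    monotone_of_deriv_nonneg (fun x => (hd x).differentiableAt) fun x => by
      rw [(hd x).deriv]; linarith [half_le_Gderiv hA x]
  linarith [hmono hxy]

theorem Gmap_strictMono (hA : IsAdmissibleWidth ξ α ν) : StrictMono (Gmap ξ α ν) :=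
  fun x y hxy => by linarith [sub_div_two_le_Gmap_sub hA hxy.le]

theorem Gmap_surjective (hA : IsAdmissibleWidth ξ α ν) : Surjective (Gmap ξ α ν) := by
  refine Continuous.surjective
    (continuous_iff_continuousAt.2 fun x => (hasDerivAt_Gmap hA.pos x).continuousAt)
    (tendsto_atTop_atTop.2 fun b => ⟨max 0 (2 * (b - Gmap ξ α ν 0)), fun a ha => ?_⟩)
    (tendsto_atBot_atBot.2 fun b => ⟨min 0 (2 * (b - Gmap ξ α ν 0)), fun a ha => ?_⟩)
  · linarith [sub_div_two_le_Gmap_sub hA ((le_max_left _ _).trans ha), le_max_right 0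
      (2 * (b - Gmap ξ α ν 0))]
  · linarith [sub_div_two_le_Gmap_sub hA (ha.trans (min_le_left _ _)), min_le_right 0
      (2 * (b - Gmap ξ α ν 0))]

theorem Gmap_Ginv (hA : IsAdmissibleWidth ξ α ν) (x : ℝ) : Gmap ξ α ν (Ginv ξ α ν x) = x :=
  rightInverse_invFun (Gmap_surjective hA) x

theorem Ginv_Gmap (hA : IsAdmissibleWidth ξ α ν) (x : ℝ) : Ginv ξ α ν (Gmap ξ α ν x) = x :=
  leftInverse_invFun (Gmap_strictMono hA).injective x

theorem Ginv_lt_Ginv_iff (hA : IsAdmissibleWidth ξ α ν) {x y : ℝ} :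
    Ginv ξ α ν x < Ginv ξ α ν y ↔ x < y := by
  conv_rhs => rw [← Gmap_Ginv hA x, ← Gmap_Ginv hA y]
  exact (Gmap_strictMono hA).lt_iff_lt.symm

theorem lipschitzWith_Ginv (hA : IsAdmissibleWidth ξ α ν) : LipschitzWith 2 (Ginv ξ α ν) := by
  refine LipschitzWith.of_dist_le_mul fun x y => ?_
  rw [Real.dist_eq, Real.dist_eq, NNReal.coe_ofNat]
  rcases le_total (Ginv ξ α ν x) (Ginv ξ α ν y) with h | h
  · have := sub_div_two_le_Gmap_sub hA h
    rw [Gmap_Ginv hA, Gmap_Ginv hA] at this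
    rw [abs_of_nonpos (by linarith), abs_of_nonpos (by linarith)]
    linarith
  · have := sub_div_two_le_Gmap_sub hA h
    rw [Gmap_Ginv hA, Gmap_Ginv hA] at this
    rw [abs_of_nonneg (by linarith), abs_of_nonneg (by linarith)]
    linarith

theorem Ginv_knot (hA : IsAdmissibleWidth ξ α ν) (i : Fin k) : Ginv ξ α ν (ξ i) = ξ i := by
  conv_lhs => rw [← Gmap_knot (α := α) hA.pos hA.gap i]
  exact Ginv_Gmap hA (ξ i)

theorem Ginv_mem_piece (hA : IsAdmissibleWidth ξ α ν) {i : Fin (k + 1)} {x : ℝ}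
    (hx : x ∈ piece ξ i) : Ginv ξ α ν x ∈ piece ξ i :=
  ⟨fun j hj => by rw [← Ginv_knot hA j, Ginv_lt_Ginv_iff hA]; exact hx.1 j hj,
    fun j hj => by rw [← Ginv_knot hA j, Ginv_lt_Ginv_iff hA]; exact hx.2 j hj⟩

theorem hasDerivAt_Ginv (hA : IsAdmissibleWidth ξ α ν) (x : ℝ) :
    HasDerivAt (Ginv ξ α ν) (Gderiv ξ α ν (Ginv ξ α ν x))⁻¹ x :=
  HasDerivAt.of_local_left_inverse (lipschitzWith_Ginv hA).continuous.continuousAt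
    (hasDerivAt_Gmap hA.pos _) (by linarith [half_le_Gderiv hA (Ginv ξ α ν x)])
    (Eventually.of_forall (Gmap_Ginv hA))

end Transformation

section PieceModel

variable {k : ℕ} {ξ α : Fin k → ℝ} {ν : ℝ}

/-- `G''` on the piece `i`, extended to all of `ℝ`. -/
def Gsecond (ξ α : Fin k → ℝ) (ν : ℝ) (i : Fin (k + 1)) : ℝ → ℝ :=
  knotSum ξ ν (fun j => pieceSign i j * α j) sqBump''

def Gthird (ξ α : Fin k → ℝ) (ν : ℝ) (i : Fin (k + 1)) : ℝ → ℝ :=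
  knotSum ξ ν (fun j => pieceSign i j * α j / ν) sqBump'''

theorem oddBump_eq_pieceSign_mul (hν : 0 < ν) {i : Fin (k + 1)} {x : ℝ} (hx : x ∈ piece ξ i)
    (j : Fin k) : oddBump ((x - ξ j) / ν) = pieceSign i j * sqBump ((x - ξ j) / ν) := by
  unfold pieceSign
  split_ifs with hj
  · rw [one_mul, oddBump_of_nonneg (div_nonneg (sub_nonneg.2 (hx.1 j hj).le) hν.le)]
  · rw [neg_one_mul, oddBump_of_nonpos (div_nonpos_of_nonpos_of_nonneg
      (sub_nonpos.2 (hx.2 j (not_lt.1 hj)).le) hν.le)]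

theorem Gmap_eqOn_piece (hν : 0 < ν) (i : Fin (k + 1)) :
    EqOn (Gmap ξ α ν) (fun x => x + knotSum ξ ν (fun j => pieceSign i j * α j * ν ^ 2) sqBump x)
      (piece ξ i) := fun x hx => by
  rw [Gmap_eq_knotSum hν]
  refine congrArg (x + ·) (Finset.sum_congr rfl fun j _ => ?_)
  rw [oddBump_eq_pieceSign_mul hν hx]
  ring

theorem hasDerivAt_Gderiv_of_mem_piece (hν : 0 < ν) {i : Fin (k + 1)} {x : ℝ}
    (hx : x ∈ piece ξ i) : HasDerivAt (Gderiv ξ α ν) (Gsecond ξ α ν i x) x := by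
  set c : Fin k → ℝ := fun j => pieceSign i j * α j
  have hmodel : ∀ y, HasDerivAt (fun y => y + knotSum ξ ν (fun j => c j * ν ^ 2) sqBump y)
      (1 + knotSum ξ ν (fun j => c j * ν) sqBump' y) y := fun y => by
    refine ((hasDerivAt_id y).add (hasDerivAt_knotSum hasDerivAt_sqBump y)).congr_deriv ?_
    congr 2; funext j; field_simp
  have hmodel' : HasDerivAt (fun y => 1 + knotSum ξ ν (fun j => c j * ν) sqBump' y)
      (Gsecond ξ α ν i x) x := by
    refine (hasDerivAt_knotSum hasDerivAt_sqBump' x).const_add 1 |>.congr_deriv ?_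
    simp only [Gsecond, c]; congr 1; funext j; field_simp
  refine hmodel'.congr_of_eventuallyEq ?_
  filter_upwards [(isOpen_piece ξ i).mem_nhds hx] with y hy
  exact (hasDerivAt_Gmap hν y).unique ((hmodel y).congr_of_eventuallyEq
    (eventuallyEq_of_mem ((isOpen_piece ξ i).mem_nhds hy) (Gmap_eqOn_piece hν i)))

theorem deriv_deriv_Gmap_of_mem_piece (hν : 0 < ν) {i : Fin (k + 1)} {x : ℝ}
    (hx : x ∈ piece ξ i) : deriv (deriv (Gmap ξ α ν)) x = Gsecond ξ α ν i x := by
  rw [deriv_Gmap hν]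
  exact (hasDerivAt_Gderiv_of_mem_piece hν hx).deriv

theorem hasDerivAt_Gsecond (i : Fin (k + 1)) (x : ℝ) :
    HasDerivAt (Gsecond ξ α ν i) (Gthird ξ α ν i x) x :=
  hasDerivAt_knotSum hasDerivAt_sqBump'' x

theorem Gsecond_castSucc_knot (hν : 0 < ν) (hgap : ∀ i j, i ≠ j → 2 * ν < |ξ i - ξ j|)
    (i : Fin k) : Gsecond ξ α ν i.castSucc (ξ i) = -(2 * α i) := by
  rw [Gsecond, knotSum_knot (F := sqBump'') hgap
    (fun _ => indicator_Icc_eq_zero_of_one_lt_abs _) hν, sqBump''_zero]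
  simp [pieceSign, mul_comm]

theorem Gsecond_succ_knot (hν : 0 < ν) (hgap : ∀ i j, i ≠ j → 2 * ν < |ξ i - ξ j|)
    (i : Fin k) : Gsecond ξ α ν i.succ (ξ i) = 2 * α i := by
  rw [Gsecond, knotSum_knot (F := sqBump'') hgap
    (fun _ => indicator_Icc_eq_zero_of_one_lt_abs _) hν, sqBump''_zero]
  simp [pieceSign, mul_comm]

theorem exists_lipschitzWith_Gsecond (i : Fin (k + 1)) :
    ∃ K, LipschitzWith K (Gsecond ξ α ν i) :=
  exists_lipschitzWith_sqBump''.elim fun _ h => exists_lipschitzWith_knotSum h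

theorem exists_lipschitzWith_Gthird (i : Fin (k + 1)) :
    ∃ K, LipschitzWith K (Gthird ξ α ν i) :=
  exists_lipschitzWith_sqBump'''.elim fun _ h => exists_lipschitzWith_knotSum h

theorem hasCompactSupport_Gsecond (hν : 0 < ν) (i : Fin (k + 1)) :
    HasCompactSupport (Gsecond ξ α ν i) :=
  hasCompactSupport_knotSum (fun _ => indicator_Icc_eq_zero_of_one_lt_abs _) hν

theorem hasCompactSupport_Gthird (hν : 0 < ν) (i : Fin (k + 1)) :
    HasCompactSupport (Gthird ξ α ν i) :=
  hasCompactSupport_knotSum (fun _ => indicator_Icc_eq_zero_of_one_lt_abs _) hν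

end PieceModel

section Coefficients

variable {k : ℕ} {ξ α : Fin k → ℝ} {b s : ℝ → ℝ} {ν : ℝ}

/-- `G'·μ + ½ G''·σ²` (Itô's formula for `G(X)`), so that `μ̃ = itoDrift ∘ G⁻¹`. -/
def itoDrift (b s : ℝ → ℝ) (ξ : Fin k → ℝ) (ν : ℝ) (y : ℝ) : ℝ :=
  deriv (Gmap ξ (alphaCoef b s ξ) ν) y * b y + 1 / 2 * GsecondExt b s ξ ν y * s y ^ 2

/-- `itoDrift` on the piece `i`, with `μ` replaced by an extension `g` of `μ|_(ξᵢ₋₁, ξᵢ)`. -/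
def pieceDrift (ξ α : Fin k → ℝ) (ν : ℝ) (i : Fin (k + 1)) (g s : ℝ → ℝ) (y : ℝ) : ℝ :=
  Gderiv ξ α ν y * g y + 1 / 2 * Gsecond ξ α ν i y * s y ^ 2

theorem itoDrift_eqOn_piece (hν : 0 < ν) {i : Fin (k + 1)} {g : ℝ → ℝ}
    (hg : EqOn b g (piece ξ i)) :
    EqOn (itoDrift b s ξ ν) (pieceDrift ξ (alphaCoef b s ξ) ν i g s) (piece ξ i) := fun y hy => by
  have hknot : ¬∃ j, ξ j = y := fun ⟨j, hj⟩ => ne_of_mem_piece hy j hj.symm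
  rw [itoDrift, pieceDrift, GsecondExt, dif_neg hknot, deriv_deriv_Gmap_of_mem_piece hν hy,
    deriv_Gmap hν, hg hy]

theorem GsecondExt_knot (hξ : StrictMono ξ) (i : Fin k) :
    GsecondExt b s ξ ν (ξ i) = 2 * alphaCoef b s ξ i +
      2 * (Function.rightLim b (ξ i) - b (ξ i)) / s (ξ i) ^ 2 := by
  have hex : ∃ j, ξ j = ξ i := ⟨i, rfl⟩
  rw [GsecondExt, dif_pos hex, hξ.injective hex.choose_spec]

theorem leftLim_eq_of_eqOn_piece (hξ : StrictMono ξ) {i : Fin k} {g : ℝ → ℝ}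
    (hg : Continuous g) (hgb : EqOn b g (piece ξ i.castSucc)) :
    Function.leftLim b (ξ i) = g (ξ i) :=
  leftLim_eq_of_tendsto (((hg.tendsto _).mono_left nhdsWithin_le_nhds).congr'
    ((eventually_mem_piece_castSucc hξ i).mono fun _ hx => (hgb hx).symm))

theorem rightLim_eq_of_eqOn_piece (hξ : StrictMono ξ) {i : Fin k} {g : ℝ → ℝ}
    (hg : Continuous g) (hgb : EqOn b g (piece ξ i.succ)) :
    Function.rightLim b (ξ i) = g (ξ i) :=
  rightLim_eq_of_tendsto (((hg.tendsto _).mono_left nhdsWithin_le_nhds).congr'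
    ((eventually_mem_piece_succ hξ i).mono fun _ hx => (hgb hx).symm))

/-- This is where the choice of `α` and of `G''(ξᵢ)` enters: both one-sided limits of
`G'·μ + ½ G''·σ²` at `ξᵢ` equal `(μ(ξᵢ-) + μ(ξᵢ+))/2`, and so does its value. -/
theorem itoDrift_knot (hξ : StrictMono ξ) (hA : IsAdmissibleWidth ξ (alphaCoef b s ξ) ν)
    {i : Fin k} (hs0 : s (ξ i) ≠ 0) {gl gr : ℝ → ℝ} (hgl : Continuous gl)
    (hglb : EqOn b gl (piece ξ i.castSucc)) (hgr : Continuous gr)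
    (hgrb : EqOn b gr (piece ξ i.succ)) :
    itoDrift b s ξ ν (ξ i) = pieceDrift ξ (alphaCoef b s ξ) ν i.castSucc gl s (ξ i) ∧
      itoDrift b s ξ ν (ξ i) = pieceDrift ξ (alphaCoef b s ξ) ν i.succ gr s (ξ i) := by
  have hα : alphaCoef b s ξ i = (gl (ξ i) - gr (ξ i)) / (2 * s (ξ i) ^ 2) := by
    rw [alphaCoef, leftLim_eq_of_eqOn_piece hξ hgl hglb, rightLim_eq_of_eqOn_piece hξ hgr hgrb]
  simp only [itoDrift, pieceDrift, deriv_Gmap hA.pos, Gderiv_knot hA.pos hA.gap,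
    GsecondExt_knot hξ, Gsecond_castSucc_knot hA.pos hA.gap, Gsecond_succ_knot hA.pos hA.gap,
    rightLim_eq_of_eqOn_piece hξ hgr hgrb, hα]
  constructor <;> field_simp <;> ring

theorem continuous_itoDrift (hξ : StrictMono ξ) (hA : IsAdmissibleWidth ξ (alphaCoef b s ξ) ν)
    (hb : PiecewiseLipschitz ξ b) (hs : Continuous s) (hs0 : ∀ i, s (ξ i) ≠ 0) :
    Continuous (itoDrift b s ξ ν) := by
  have hext : ∀ i, ∃ g : ℝ → ℝ, Continuous g ∧ EqOn b g (piece ξ i) := fun i => by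
    obtain ⟨L, hL⟩ := hb i
    obtain ⟨g, hg, hgb⟩ := hL.extend_real
    exact ⟨g, hg.continuous, hgb⟩
  choose g hg hgb using hext
  have hmodel : ∀ i, Continuous (pieceDrift ξ (alphaCoef b s ξ) ν i (g i) s) := fun i => by
    obtain ⟨_, h₁⟩ := exists_lipschitzWith_Gderiv_mul (ξ := ξ) (α := alphaCoef b s ξ) hA.pos
      (LipschitzWith.const (1 : ℝ))
    obtain ⟨_, h₂⟩ := exists_lipschitzWith_Gsecond (ξ := ξ) (α := alphaCoef b s ξ) (ν := ν) i
    simp only [mul_one] at h₁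
    exact (h₁.continuous.mul (hg i)).add ((continuous_const.mul h₂.continuous).mul (hs.pow 2))
  refine continuous_iff_continuousAt.2 fun y => ?_
  by_cases hy : ∃ j, y = ξ j
  · obtain ⟨j, rfl⟩ := hy
    obtain ⟨hl, hr⟩ := itoDrift_knot hξ hA (hs0 j) (hg _) (hgb _) (hg _) (hgb _)
    refine continuousAt_iff_continuous_left'_right'.2 ⟨?_, ?_⟩
    · exact (hmodel _).continuousWithinAt.congr_of_eventuallyEq
        ((eventually_mem_piece_castSucc hξ j).mono fun x hx => itoDrift_eqOn_piece hA.pos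
          (hgb _) hx) hl
    · exact (hmodel _).continuousWithinAt.congr_of_eventuallyEq
        ((eventually_mem_piece_succ hξ j).mono fun x hx => itoDrift_eqOn_piece hA.pos
          (hgb _) hx) hr
  · obtain ⟨i, hi⟩ := exists_mem_piece hξ fun j h => hy ⟨j, h⟩
    exact (hmodel i).continuousAt.congr (eventuallyEq_of_mem ((isOpen_piece ξ i).mem_nhds hi)
      (itoDrift_eqOn_piece hA.pos (hgb i))).symm

theorem exists_lipschitzWith_pieceDrift (hν : 0 < ν) (i : Fin (k + 1)) {g : ℝ → ℝ}
    {Kg Ks : ℝ≥0} (hg : LipschitzWith Kg g) (hs : LipschitzWith Ks s) :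
    ∃ K, LipschitzWith K (pieceDrift ξ α ν i g s) := by
  obtain ⟨_, h₁⟩ := exists_lipschitzWith_Gderiv_mul (ξ := ξ) (α := α) hν hg
  obtain ⟨_, h₂⟩ := exists_lipschitzWith_Gsecond (ξ := ξ) (α := α) (ν := ν) i
  obtain ⟨_, h₃⟩ := h₂.mul_of_hasCompactSupport (hasCompactSupport_Gsecond hν i) hs
  obtain ⟨_, h₄⟩ := h₃.mul_of_hasCompactSupport (hasCompactSupport_Gsecond hν i).mul_right hs
  have h : pieceDrift ξ α ν i g s = fun y => Gderiv ξ α ν y * g y +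
      1 / 2 * (Gsecond ξ α ν i * s * s) y := funext fun y => by
    simp only [pieceDrift, Pi.mul_apply]; ring
  exact ⟨_, h ▸ h₁.add (h₄.const_mul (1 / 2))⟩

/-- The chain rule through `G⁻¹`: a derivative of the form `G'·A + B`, with `A` Lipschitz and `B`
Lipschitz with compact support, becomes `A + B / G'`, which stays Lipschitz because `G' ≥ 1/2`. -/
theorem exists_hasDerivAt_comp_Ginv (hA : IsAdmissibleWidth ξ α ν) {U : Set ℝ}
    {F A B : ℝ → ℝ} (hF : ∀ y ∈ U, HasDerivAt F (Gderiv ξ α ν y * A y + B y) y)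
    {KA KB : ℝ≥0} (hAL : LipschitzWith KA A) (hBL : LipschitzWith KB B)
    (hBc : HasCompactSupport B) :
    ∃ (f' : ℝ → ℝ) (L : ℝ≥0), (∀ x, Ginv ξ α ν x ∈ U → HasDerivAt (F ∘ Ginv ξ α ν) (f' x) x) ∧
      LipschitzWith L f' := by
  obtain ⟨_, hinv⟩ := exists_lipschitzWith_inv_Gderiv hA
  obtain ⟨_, hBinv⟩ := hBL.mul_of_hasCompactSupport hBc hinv
  refine ⟨fun x => A (Ginv ξ α ν x) + (B * fun y => (Gderiv ξ α ν y)⁻¹) (Ginv ξ α ν x), _,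
    fun x hx => ?_, (hAL.comp (lipschitzWith_Ginv hA)).add (hBinv.comp (lipschitzWith_Ginv hA))⟩
  have hne : Gderiv ξ α ν (Ginv ξ α ν x) ≠ 0 := by linarith [half_le_Gderiv hA (Ginv ξ α ν x)]
  refine ((hF _ hx).comp x (hasDerivAt_Ginv hA x)).congr_deriv ?_
  simp only [Pi.mul_apply]
  field_simp

theorem piecewiseLipschitz_tildeDrift (hA : IsAdmissibleWidth ξ (alphaCoef b s ξ) ν)
    (hb : PiecewiseLipschitz ξ b) {Ks : ℝ≥0} (hs : LipschitzWith Ks s) :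
    PiecewiseLipschitz ξ (tildeDrift b s ξ ν) := fun i => by
  obtain ⟨_, hL⟩ := hb i
  obtain ⟨g, hg, hgb⟩ := hL.extend_real
  obtain ⟨_, hK⟩ := exists_lipschitzWith_pieceDrift (α := alphaCoef b s ξ) hA.pos i hg hs
  exact ⟨_, (hK.comp (lipschitzWith_Ginv hA)).lipschitzOnWith.congr fun x hx =>
    (itoDrift_eqOn_piece hA.pos hgb (Ginv_mem_piece hA hx)).symm⟩

theorem piecewiseC1Lipschitz_tildeDrift (hA : IsAdmissibleWidth ξ (alphaCoef b s ξ) ν)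
    (hb1 : PiecewiseLipschitz ξ b) (hb2 : PiecewiseC1Lipschitz ξ b) {Ks : ℝ≥0}
    (hs : LipschitzWith Ks s) (hs2 : PiecewiseC1Lipschitz ξ s) :
    PiecewiseC1Lipschitz ξ (tildeDrift b s ξ ν) := fun i => by
  obtain ⟨_, hL⟩ := hb1 i
  obtain ⟨g, hg, hgb⟩ := hL.extend_real
  obtain ⟨b', _, hb', hb'L⟩ := hb2 i
  obtain ⟨g', hg', hg'b⟩ := hb'L.extend_real
  obtain ⟨s', _, hs', hs'L⟩ := hs2 i
  obtain ⟨t', ht', ht's⟩ := hs'L.extend_real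
  set α := alphaCoef b s ξ
  have hν := hA.pos
  set B := Gsecond ξ α ν i * g + (fun _ => (1 / 2 : ℝ)) * (Gthird ξ α ν i * s * s) +
    Gsecond ξ α ν i * s * t'
  have hBL : ∃ K, LipschitzWith K B := by
    obtain ⟨_, h₂⟩ := exists_lipschitzWith_Gsecond (ξ := ξ) (α := α) (ν := ν) i
    obtain ⟨_, h₃⟩ := exists_lipschitzWith_Gthird (ξ := ξ) (α := α) (ν := ν) i
    obtain ⟨_, h₂g⟩ := h₂.mul_of_hasCompactSupport (hasCompactSupport_Gsecond hν i) hg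
    obtain ⟨_, h₂s⟩ := h₂.mul_of_hasCompactSupport (hasCompactSupport_Gsecond hν i) hs
    obtain ⟨_, h₂st⟩ := h₂s.mul_of_hasCompactSupport (hasCompactSupport_Gsecond hν i).mul_right ht'
    obtain ⟨_, h₃s⟩ := h₃.mul_of_hasCompactSupport (hasCompactSupport_Gthird hν i) hs
    obtain ⟨_, h₃ss⟩ := h₃s.mul_of_hasCompactSupport (hasCompactSupport_Gthird hν i).mul_right hs
    exact ⟨_, (h₂g.add (h₃ss.const_mul (1 / 2))).add h₂st⟩
  obtain ⟨_, hBL⟩ := hBL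
  have hBc : HasCompactSupport B :=
    ((hasCompactSupport_Gsecond hν i).mul_right.add
      (hasCompactSupport_Gthird hν i).mul_right.mul_right.mul_left).add
      (hasCompactSupport_Gsecond hν i).mul_right.mul_right
  have hF : ∀ y ∈ piece ξ i,
      HasDerivAt (pieceDrift ξ α ν i g s) (Gderiv ξ α ν y * g' y + B y) y := fun y hy => by
    have hgy : HasDerivAt g (g' y) y := by
      rw [← hg'b hy]
      exact (hb' y hy).congr_of_eventuallyEq
        (eventuallyEq_of_mem ((isOpen_piece ξ i).mem_nhds hy) hgb).symm
    have hsy : HasDerivAt s (t' y) y := by rw [← ht's hy]; exact hs' y hy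
    refine ((hasDerivAt_Gderiv_of_mem_piece hν hy).mul hgy).add
      (((hasDerivAt_Gsecond i y).const_mul (1 / 2)).mul (hsy.pow 2)) |>.congr_deriv ?_
    simp only [B, Pi.add_apply, Pi.mul_apply, Pi.pow_apply]
    push_cast
    ring
  obtain ⟨f', L, hf', hf'L⟩ := exists_hasDerivAt_comp_Ginv hA hF hg' hBL hBc
  refine ⟨f', L, fun x hx => (hf' x (Ginv_mem_piece hA hx)).congr_of_eventuallyEq ?_,
    hf'L.lipschitzOnWith⟩
  filter_upwards [(isOpen_piece ξ i).mem_nhds hx] with z hz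
  exact itoDrift_eqOn_piece hν hgb (Ginv_mem_piece hA hz)

theorem continuous_tildeDrift (hξ : StrictMono ξ) (hA : IsAdmissibleWidth ξ (alphaCoef b s ξ) ν)
    (hb : PiecewiseLipschitz ξ b) {Ks : ℝ≥0} (hs : LipschitzWith Ks s)
    (hs0 : ∀ i, s (ξ i) ≠ 0) : Continuous (tildeDrift b s ξ ν) :=
  (continuous_itoDrift hξ hA hb hs.continuous hs0).comp (lipschitzWith_Ginv hA).continuous

theorem tildeDiff_eq_comp (hν : 0 < ν) : tildeDiff b s ξ ν =
    (fun y => Gderiv ξ (alphaCoef b s ξ) ν y * s y) ∘ Ginv ξ (alphaCoef b s ξ) ν := by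
  funext x
  simp only [tildeDiff, deriv_Gmap hν, comp_apply]

theorem exists_lipschitzWith_tildeDiff (hA : IsAdmissibleWidth ξ (alphaCoef b s ξ) ν)
    {Ks : ℝ≥0} (hs : LipschitzWith Ks s) : ∃ L, LipschitzWith L (tildeDiff b s ξ ν) := by
  obtain ⟨_, hK⟩ := exists_lipschitzWith_Gderiv_mul (ξ := ξ) (α := alphaCoef b s ξ) hA.pos hs
  exact ⟨_, tildeDiff_eq_comp hA.pos ▸ hK.comp (lipschitzWith_Ginv hA)⟩

theorem tildeDiff_knot (hA : IsAdmissibleWidth ξ (alphaCoef b s ξ) ν) (i : Fin k) :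
    tildeDiff b s ξ ν (ξ i) = s (ξ i) := by
  simp [tildeDiff_eq_comp hA.pos, Ginv_knot hA, Gderiv_knot hA.pos hA.gap]

theorem piecewiseC1Lipschitz_tildeDiff (hA : IsAdmissibleWidth ξ (alphaCoef b s ξ) ν)
    {Ks : ℝ≥0} (hs : LipschitzWith Ks s) (hs2 : PiecewiseC1Lipschitz ξ s) :
    PiecewiseC1Lipschitz ξ (tildeDiff b s ξ ν) := fun i => by
  obtain ⟨s', _, hs', hs'L⟩ := hs2 i
  obtain ⟨t', ht', ht's⟩ := hs'L.extend_real
  set α := alphaCoef b s ξ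
  obtain ⟨_, hBL⟩ := (exists_lipschitzWith_Gsecond (ξ := ξ) (α := α) (ν := ν) i).elim
    fun _ h => h.mul_of_hasCompactSupport (hasCompactSupport_Gsecond hA.pos i) hs
  have hF : ∀ y ∈ piece ξ i, HasDerivAt (fun y => Gderiv ξ α ν y * s y)
      (Gderiv ξ α ν y * t' y + (Gsecond ξ α ν i * s) y) y := fun y hy => by
    rw [← ht's hy]
    exact ((hasDerivAt_Gderiv_of_mem_piece hA.pos hy).mul (hs' y hy)).congr_deriv
      (by simp only [Pi.mul_apply]; ring)
  obtain ⟨f', L, hf', hf'L⟩ :=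
    exists_hasDerivAt_comp_Ginv hA hF ht' hBL (hasCompactSupport_Gsecond hA.pos i).mul_right
  exact ⟨f', L, fun x hx => tildeDiff_eq_comp hA.pos ▸ hf' x (Ginv_mem_piece hA hx),
    hf'L.lipschitzOnWith⟩

end Coefficients

theorem tilde_coefficients_assumptions_general
    (b s : ℝ → ℝ) (k : ℕ) (ξ : Fin k → ℝ) (hξ : StrictMono ξ)
    (hb1 : PiecewiseLipschitz ξ b) (hb2 : PiecewiseC1Lipschitz ξ b)
    (hs1 : ∃ L : ℝ≥0, LipschitzWith L s) (hs0 : ∀ i, s (ξ i) ≠ 0)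
    (hs2 : PiecewiseC1Lipschitz ξ s)
    (ν : ℝ) (hν : 0 < ν) (hν' : ENNReal.ofReal ν < rho ξ (alphaCoef b s ξ)) :
    PiecewiseLipschitz ξ (tildeDrift b s ξ ν) ∧
    PiecewiseC1Lipschitz ξ (tildeDrift b s ξ ν) ∧
    ((∃ L : ℝ≥0, LipschitzWith L (tildeDiff b s ξ ν)) ∧ ∀ i, tildeDiff b s ξ ν (ξ i) ≠ 0) ∧
    PiecewiseC1Lipschitz ξ (tildeDiff b s ξ ν) ∧
    Continuous (tildeDrift b s ξ ν) := by
  have hA := isAdmissibleWidth_of_lt_rho hξ hν hν'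
  obtain ⟨_, hs⟩ := hs1
  exact ⟨piecewiseLipschitz_tildeDrift hA hb1 hs,
    piecewiseC1Lipschitz_tildeDrift hA hb1 hb2 hs hs2,
    ⟨exists_lipschitzWith_tildeDiff hA hs, fun i => tildeDiff_knot hA i ▸ hs0 i⟩,
    piecewiseC1Lipschitz_tildeDiff hA hs hs2,
    continuous_tildeDrift hξ hA hb1 hs hs0⟩

/-- Lemma 4.2: the transformed coefficients `μ̃` and `σ̃` satisfy (μ1), (μ2) and
(σ1), (σ2) respectively, and `μ̃` is continuous. -/
theorem tilde_coefficients_assumptions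
    (b s : ℝ → ℝ) (k : ℕ) (hk : 0 < k) (ξ : Fin k → ℝ) (hξ : StrictMono ξ)
    (hb1 : PiecewiseLipschitz ξ b) (hb2 : PiecewiseC1Lipschitz ξ b)
    (hs1 : ∃ L : ℝ≥0, LipschitzWith L s) (hs0 : ∀ i, s (ξ i) ≠ 0)
    (hs2 : PiecewiseC1Lipschitz ξ s)
    (ν : ℝ) (hν : 0 < ν) (hν' : ENNReal.ofReal ν < rho ξ (alphaCoef b s ξ)) :
    PiecewiseLipschitz ξ (tildeDrift b s ξ ν) ∧
    PiecewiseC1Lipschitz ξ (tildeDrift b s ξ ν) ∧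
    ((∃ L : ℝ≥0, LipschitzWith L (tildeDiff b s ξ ν)) ∧ ∀ i, tildeDiff b s ξ ν (ξ i) ≠ 0) ∧
    PiecewiseC1Lipschitz ξ (tildeDiff b s ξ ν) ∧
    Continuous (tildeDrift b s ξ ν) :=
  tilde_coefficients_assumptions_general b s k ξ hξ hb1 hb2 hs1 hs0 hs2 ν hν hν'

end AdaptiveQM
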